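/- arXiv:math-ph/9808016 — 7 statements merged into one kernel-verified Lean document; each statement's English description precedes it below -/
import Mathlib

section
/- For invertible density matrices P, Q and s ≥ 0, Tr(P^{1/2} (Δ_{Q,P}−I)(Δ_{Q,P}+sI)^{-1}(Δ_{Q,P}−I)(P^{1/2})) = Tr((Q−P) (L_Q + s R_P)^{-1}(Q−P)). -/
/-!
Write `P = R²`. Right multiplication by `R⁻¹` intertwines `Δ_{Q,P} + s` with `L_Q + s R_P`,
so `C R⁻¹` solves the equation defining `B`. That equation has at most one solution: if
`Q D + s D P = 0` then `Tr(D* Q D) + s Tr(D P D*) = 0` is a sum of nonnegative terms, which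
forces `D* Q D = 0` and hence `D = 0`. Hence `B = C R⁻¹`, and the two traces agree by cyclicity.
-/

open Matrix
open scoped ComplexOrder

namespace Matrix

section RCLike

variable {m n 𝕜 : Type*} [Fintype m] [Fintype n] [RCLike 𝕜]

lemma PosDef.eq_zero_of_conjTranspose_mul_mul_eq_zero {Q : Matrix n n 𝕜} (hQ : Q.PosDef)
    {D : Matrix n m 𝕜} (h : Dᴴ * Q * D = 0) : D = 0 := by
  refine ext_iff_mulVec.mpr fun v => ?_
  rw [zero_mulVec]
  by_contra hv
  have := hQ.dotProduct_mulVec_pos hv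
  rw [star_mulVec, dotProduct_mulVec, vecMul_vecMul, ← dotProduct_mulVec, mulVec_mulVec, h] at this
  simp at this

lemma eq_zero_of_mul_add_smul_mul_eq_zero {Q P D : Matrix n n 𝕜} (hQ : Q.PosDef)
    (hP : P.PosSemidef) {s : ℝ} (hs : 0 ≤ s) (h : Q * D + (s : 𝕜) • (D * P) = 0) : D = 0 := by
  have hQD := hQ.posSemidef.conjTranspose_mul_mul_same D
  have hPD : 0 ≤ (s : 𝕜) * (D * P * Dᴴ).trace :=
    mul_nonneg (RCLike.ofReal_nonneg.mpr hs) (hP.mul_mul_conjTranspose_same D).trace_nonneg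
  have hsum : (Dᴴ * Q * D).trace + (s : 𝕜) * (D * P * Dᴴ).trace = 0 := by
    have := congrArg (fun M => (Dᴴ * M).trace) h
    simp only [mul_add, Matrix.mul_smul, trace_add, trace_smul, smul_eq_mul, mul_zero,
      trace_zero] at this
    rwa [← mul_assoc, trace_mul_comm Dᴴ (D * P)] at this
  refine hQ.eq_zero_of_conjTranspose_mul_mul_eq_zero (hQD.trace_eq_zero_iff.mp ?_)
  exact ((add_eq_zero_iff_of_nonneg hQD.trace_nonneg hPD).mp hsum).1

lemma injective_mul_add_smul_mul {Q P : Matrix n n 𝕜} (hQ : Q.PosDef) (hP : P.PosSemidef)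
    {s : ℝ} (hs : 0 ≤ s) : Function.Injective fun B => Q * B + (s : 𝕜) • (B * P) := by
  intro B B' h
  rw [← sub_eq_zero]
  refine eq_zero_of_mul_add_smul_mul_eq_zero hQ hP hs ?_
  rw [mul_sub, sub_mul, smul_sub, sub_add_sub_comm]
  exact sub_eq_zero.mpr h

end RCLike

section CommRing

variable {n α : Type*} [Fintype n] [DecidableEq n] [CommRing α]

lemma mul_add_smul_mul_sq_eq_of_mul_mul_inv_sq_add_smul_eq {Q R C : Matrix n n α}
    (hR : IsUnit R) {c : α} (hC : Q * C * (R * R)⁻¹ + c • C = Q * R * (R * R)⁻¹ - R) :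
    Q * (C * R⁻¹) + c • (C * R⁻¹ * (R * R)) = Q - R * R := by
  obtain ⟨u, rfl⟩ := hR
  have := congrArg (· * (u : Matrix n n α)) hC
  simpa only [mul_inv_rev, ← coe_units_inv, add_mul, sub_mul, smul_mul_assoc, mul_assoc,
    Units.inv_mul_cancel_left, Units.mul_inv, Units.inv_mul, mul_one] using this

lemma trace_mul_mul_mul_inv_sq_sub {Q R C : Matrix n n α} (hR : IsUnit R) :
    (R * (Q * C * (R * R)⁻¹ - C)).trace = ((Q - R * R) * (C * R⁻¹)).trace := by
  obtain ⟨u, rfl⟩ := hR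
  simp only [mul_inv_rev, ← coe_units_inv, mul_sub, sub_mul, trace_sub, ← mul_assoc]
  congr 1
  · rw [trace_mul_comm]
    simp only [mul_assoc, Units.inv_mul_cancel_left]
  · rw [trace_mul_comm _ (↑u⁻¹ : Matrix n n α)]
    simp only [mul_assoc, Units.inv_mul_cancel_left]

end CommRing

end Matrix

/-- `R = P^{1/2}`, and `C = (Δ_{Q,P} + s)⁻¹ (Δ_{Q,P} − 1) R`, `B = (L_Q + s R_P)⁻¹ (Q − P)` are
given by the linear equations they solve. -/
theorem relative_entropy_integrand_identity_general {n : ℕ}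
    (P Q R B C : Matrix (Fin n) (Fin n) ℂ) (s : ℝ) (hs : 0 ≤ s)
    (hP : P.PosDef) (hQ : Q.PosDef)
    (hR : R.PosDef) (hR2 : R * R = P)
    (hC : Q * C * P⁻¹ + (s : ℂ) • C = Q * R * P⁻¹ - R)
    (hB : Q * B + (s : ℂ) • (B * P) = Q - P) :
    (R * (Q * C * P⁻¹ - C)).trace = ((Q - P) * B).trace := by
  subst hR2
  have hCR := mul_add_smul_mul_sq_eq_of_mul_mul_inv_sq_add_smul_eq hR.isUnit hC
  have hB_eq : B = C * R⁻¹ := injective_mul_add_smul_mul hQ hP.posSemidef hs (hB.trans hCR.symm)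
  rw [hB_eq, trace_mul_mul_mul_inv_sq_sub hR.isUnit]

/-- For invertible density matrices `P, Q`, `R = P^{1/2}`, and `s ≥ 0`:
`Tr (P^{1/2} * (Δ−I)(Δ+s)⁻¹(Δ−I)(P^{1/2})) = Tr ((Q−P) * (L_Q + s R_P)⁻¹(Q−P))`,
where `Δ = Δ_{Q,P}`, `C = (Δ+s)⁻¹((Δ−I)(P^{1/2}))` and
`B = (L_Q + s R_P)⁻¹(Q−P)` are encoded by the corresponding linear equations. -/
theorem relative_entropy_integrand_identity {n : ℕ}
    (P Q R B C : Matrix (Fin n) (Fin n) ℂ) (s : ℝ) (hs : 0 ≤ s)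
    (hP : P.PosDef) (hQ : Q.PosDef)
    (hPtr : P.trace = 1) (hQtr : Q.trace = 1)
    (hR : R.PosDef) (hR2 : R * R = P)
    (hC : Q * C * P⁻¹ + (s : ℂ) • C = Q * R * P⁻¹ - R)
    (hB : Q * B + (s : ℂ) • (B * P) = Q - P) :
    (R * (Q * C * P⁻¹ - C)).trace = ((Q - P) * B).trace :=
  relative_entropy_integrand_identity_general P Q R B C s hs hP hQ hR hR2 hC hB
end

section
/- For positive definite matrices P and Q and any function k of the form k(λ) = ∫₀^∞ σ(s)/(s+λ) ds with σ a nonnegative measure satisfying σ(1/s) = s σ(s) and k(1) = 1, one has the operator inequalities R_P^{-1} + L_Q^{-1} ≥ R_P^{-1} k(L_Q R_P^{-1}) ≥ (R_P + L_Q)^{-1} as positive operators on the Hilbert–Schmidt space. -/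
/-!
Write `L = L_Q` and `R = R_P`; both are positive operators on the Hilbert–Schmidt space. Inversion
is antitone on positive operators: if `0 ≤ S ≤ T` then `⟪a, T⁻¹ a⟫ ≤ ⟪a, S⁻¹ a⟫`. For every
`s > 0`, applying this to `R ≤ R + s⁻¹ L` and to `L ≤ L + s R` gives
`(s + 1) (L + s R)⁻¹ ≤ R⁻¹ + L⁻¹`, and applying it to `L + s R ≤ (s + 1) (L + R)` gives
`(L + R)⁻¹ ≤ (s + 1) (L + s R)⁻¹`. Since `k(1) = 1` says that `σ(s) / (s + 1)` is a probability
density on `(0, ∞)`, integrating these bounds against it yields both inequalities.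
-/

open Matrix MeasureTheory
open scoped ComplexOrder InnerProductSpace

namespace LinearMap

variable {𝕜 E : Type*} [RCLike 𝕜] [NormedAddCommGroup E] [InnerProductSpace 𝕜 E]

/-- Antitonicity of `T ↦ ⟪a, T⁻¹ a⟫`, stated without inverses. -/
theorem re_inner_le_re_inner_of_le {S T : E →ₗ[𝕜] E} (hS : S.IsPositive) (hST : S ≤ T)
    {a b c : E} (hb : S b = a) (hc : T c = a) :
    RCLike.re ⟪a, c⟫_𝕜 ≤ RCLike.re ⟪a, b⟫_𝕜 := by
  have h₁ := hS.re_inner_nonneg_left (b - c)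
  have h₂ := hST.re_inner_nonneg_left c
  have hsymm : RCLike.re ⟪S c, b⟫_𝕜 = RCLike.re ⟪a, c⟫_𝕜 := by
    rw [hS.isSymmetric, hb, inner_re_symm]
  simp only [map_sub, sub_apply, inner_sub_left, inner_sub_right, hb, hc] at h₁ h₂
  linarith [inner_re_symm (𝕜 := 𝕜) a b, inner_re_symm (𝕜 := 𝕜) a c]

end LinearMap

namespace Matrix

variable {ι 𝕜 : Type*} [Fintype ι] [DecidableEq ι] [RCLike 𝕜]

section HilbertSchmidt

noncomputable abbrev hilbertSchmidtNormedAddCommGroup : NormedAddCommGroup (Matrix ι ι 𝕜) :=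
  toMatrixNormedAddCommGroup 1 PosDef.one

attribute [local instance] hilbertSchmidtNormedAddCommGroup

abbrev hilbertSchmidtInnerProductSpace : InnerProductSpace 𝕜 (Matrix ι ι 𝕜) :=
  toMatrixInnerProductSpace 1 PosSemidef.one

attribute [local instance] hilbertSchmidtInnerProductSpace

theorem hilbertSchmidt_inner_eq (X Y : Matrix ι ι 𝕜) : ⟪X, Y⟫_𝕜 = (Xᴴ * Y).trace := by
  rw [trace_mul_comm]
  exact congrArg (fun M => trace (M * Xᴴ)) (mul_one Y)

theorem PosSemidef.isPositive_mulLeft {Q : Matrix ι ι 𝕜} (hQ : Q.PosSemidef) :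
    (LinearMap.mulLeft 𝕜 Q).IsPositive := by
  refine ⟨fun X Y => ?_, fun X => ?_⟩
  · simp only [LinearMap.mulLeft_apply, hilbertSchmidt_inner_eq, conjTranspose_mul,
      hQ.isHermitian.eq, mul_assoc]
  · rw [LinearMap.mulLeft_apply, hilbertSchmidt_inner_eq, conjTranspose_mul, hQ.isHermitian.eq]
    exact RCLike.nonneg_iff.mp (hQ.conjTranspose_mul_mul_same X).trace_nonneg |>.1

theorem PosSemidef.isPositive_mulRight {P : Matrix ι ι 𝕜} (hP : P.PosSemidef) :
    (LinearMap.mulRight 𝕜 P).IsPositive := by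
  refine ⟨fun X Y => ?_, fun X => ?_⟩
  · simp only [LinearMap.mulRight_apply, hilbertSchmidt_inner_eq, conjTranspose_mul,
      hP.isHermitian.eq, mul_assoc]
    rw [trace_mul_comm, mul_assoc]
  · rw [LinearMap.mulRight_apply, hilbertSchmidt_inner_eq, conjTranspose_mul, hP.isHermitian.eq,
      trace_mul_comm, ← mul_assoc]
    exact RCLike.nonneg_iff.mp (hP.mul_mul_conjTranspose_same X).trace_nonneg |>.1

theorem add_one_mul_re_trace_le_of_sylvester {P Q A B : Matrix ι ι 𝕜} (hP : P.PosDef)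
    (hQ : Q.PosDef) {s : ℝ} (hs : 0 < s) (hB : Q * B + (s : 𝕜) • (B * P) = A) :
    (s + 1) * RCLike.re (Aᴴ * B).trace ≤ RCLike.re (Aᴴ * (A * P⁻¹ + Q⁻¹ * A)).trace := by
  set L := LinearMap.mulLeft 𝕜 Q
  set R := LinearMap.mulRight 𝕜 P
  have hL := hQ.posSemidef.isPositive_mulLeft
  have hR := hP.posSemidef.isPositive_mulRight
  have hRx : R (A * P⁻¹) = A := nonsing_inv_mul_cancel_right P A hP.det_pos.ne'.isUnit
  have hLy : L (Q⁻¹ * A) = A := mul_nonsing_inv_cancel_left Q A hQ.det_pos.ne'.isUnit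
  have hRB : (R + ((s⁻¹ : ℝ) : 𝕜) • L) ((s : 𝕜) • B) = A := by
    rw [← hB, add_comm (Q * B)]
    simp only [L, R, LinearMap.add_apply, LinearMap.smul_apply, LinearMap.mulLeft_apply,
      LinearMap.mulRight_apply, smul_mul_assoc, mul_smul_comm, smul_smul, ← RCLike.ofReal_mul,
      inv_mul_cancel₀ hs.ne', RCLike.ofReal_one, one_smul]
  have hLB : (L + (s : 𝕜) • R) B = A := hB
  have hx := LinearMap.re_inner_le_re_inner_of_le hR (le_add_of_nonneg_right <|
    (LinearMap.nonneg_iff_isPositive _).2 <| hL.smul_of_nonneg <| RCLike.ofReal_nonneg.2 <|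
      inv_nonneg.2 hs.le) hRx hRB
  have hy := LinearMap.re_inner_le_re_inner_of_le hL (le_add_of_nonneg_right <|
    (LinearMap.nonneg_iff_isPositive _).2 <| hR.smul_of_nonneg <| RCLike.ofReal_nonneg.2 hs.le)
    hLy hLB
  rw [inner_smul_real_right, RCLike.smul_re] at hx
  simp only [hilbertSchmidt_inner_eq] at hx hy
  rw [mul_add, trace_add, map_add]
  linarith

theorem re_trace_le_add_one_mul_of_sylvester {P Q A B C : Matrix ι ι 𝕜} (hP : P.PosSemidef)
    (hQ : Q.PosSemidef) {s : ℝ} (hs : 0 ≤ s) (hB : Q * B + (s : 𝕜) • (B * P) = A)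
    (hC : Q * C + C * P = A) :
    RCLike.re (Aᴴ * C).trace ≤ (s + 1) * RCLike.re (Aᴴ * B).trace := by
  set L := LinearMap.mulLeft 𝕜 Q
  set R := LinearMap.mulRight 𝕜 P
  have hL := hQ.isPositive_mulLeft
  have hR := hP.isPositive_mulRight
  have hS : (L + (s : 𝕜) • R).IsPositive := hL.add (hR.smul_of_nonneg (RCLike.ofReal_nonneg.2 hs))
  have hST : L + (s : 𝕜) • R ≤ ((s + 1 : ℝ) : 𝕜) • (L + R) := by
    rw [LinearMap.le_def, show ((s + 1 : ℝ) : 𝕜) • (L + R) - (L + (s : 𝕜) • R) = (s : 𝕜) • L + R by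
      push_cast; module]
    exact (hL.smul_of_nonneg (RCLike.ofReal_nonneg.2 hs)).add hR
  have hC' : (((s + 1 : ℝ) : 𝕜) • (L + R)) ((((s + 1)⁻¹ : ℝ) : 𝕜) • C) = A := by
    rw [LinearMap.smul_apply, map_smul, smul_smul, ← RCLike.ofReal_mul,
      mul_inv_cancel₀ (by positivity), RCLike.ofReal_one, one_smul]
    exact hC
  have h := LinearMap.re_inner_le_re_inner_of_le hS hST hB hC'
  rw [inner_smul_real_right, RCLike.smul_re] at h
  simp only [hilbertSchmidt_inner_eq] at h
  rwa [inv_mul_le_iff₀ (by positivity)] at h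

end HilbertSchmidt

end Matrix

section KernelIntegral

open Set

variable {σ f : ℝ → ℝ}

theorem setIntegral_mul_le_of_add_one_mul_le {M : ℝ} (hσ : ∀ s, 0 < s → 0 ≤ σ s)
    (hnorm : ∫ s in Ioi (0 : ℝ), σ s / (s + 1) = 1)
    (hf : IntegrableOn (fun s => f s * σ s) (Ioi 0)) (hM : ∀ s, 0 < s → (s + 1) * f s ≤ M) :
    ∫ s in Ioi (0 : ℝ), f s * σ s ≤ M := by
  have hk : IntegrableOn (fun s => σ s / (s + 1)) (Ioi 0) :=
    Integrable.of_integral_ne_zero (by simp [hnorm])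
  calc ∫ s in Ioi (0 : ℝ), f s * σ s
      ≤ ∫ s in Ioi (0 : ℝ), M * (σ s / (s + 1)) := by
        refine setIntegral_mono_on hf (hk.const_mul M) measurableSet_Ioi fun s (hs : 0 < s) => ?_
        calc f s * σ s = (s + 1) * f s * (σ s / (s + 1)) := by field_simp
          _ ≤ M * (σ s / (s + 1)) :=
            mul_le_mul_of_nonneg_right (hM s hs) (div_nonneg (hσ s hs) (by linarith))
    _ = M := by rw [integral_const_mul, hnorm, mul_one]

theorem le_setIntegral_mul_of_le_add_one_mul {m : ℝ} (hσ : ∀ s, 0 < s → 0 ≤ σ s)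
    (hnorm : ∫ s in Ioi (0 : ℝ), σ s / (s + 1) = 1)
    (hf : IntegrableOn (fun s => f s * σ s) (Ioi 0)) (hm : ∀ s, 0 < s → m ≤ (s + 1) * f s) :
    m ≤ ∫ s in Ioi (0 : ℝ), f s * σ s := by
  have hk : IntegrableOn (fun s => σ s / (s + 1)) (Ioi 0) :=
    Integrable.of_integral_ne_zero (by simp [hnorm])
  calc m = ∫ s in Ioi (0 : ℝ), m * (σ s / (s + 1)) := by rw [integral_const_mul, hnorm, mul_one]
    _ ≤ ∫ s in Ioi (0 : ℝ), f s * σ s := by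
        refine setIntegral_mono_on (hk.const_mul m) hf measurableSet_Ioi fun s (hs : 0 < s) => ?_
        calc m * (σ s / (s + 1)) ≤ (s + 1) * f s * (σ s / (s + 1)) :=
              mul_le_mul_of_nonneg_right (hm s hs) (div_nonneg (hσ s hs) (by linarith))
          _ = f s * σ s := by field_simp

end KernelIntegral

/-- Here, for `s > 0`, `B s = (L_Q + s R_P)⁻¹(A)` (so that
`R_P⁻¹ k(L_Q R_P⁻¹)(A) = ∫₀^∞ B s σ(s) ds`) and `C = (R_P + L_Q)⁻¹(A)`. -/
theorem kubo_ando_operator_inequalities_general {n : ℕ}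
    (P Q : Matrix (Fin n) (Fin n) ℂ)
    (hP : P.PosDef) (hQ : Q.PosDef)
    (σ : ℝ → ℝ) (hσ : ∀ s, 0 < s → 0 ≤ σ s)
    (hnorm : ∫ s in Set.Ioi (0 : ℝ), σ s / (s + 1) = 1)
    (A C : Matrix (Fin n) (Fin n) ℂ)
    (B : ℝ → Matrix (Fin n) (Fin n) ℂ)
    (hB : ∀ s, 0 < s → Q * B s + (s : ℂ) • (B s * P) = A)
    (hC : Q * C + C * P = A)
    (hInt : IntegrableOn (fun s => ((Aᴴ * B s).trace).re * σ s) (Set.Ioi 0)) :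
    (∫ s in Set.Ioi (0 : ℝ), ((Aᴴ * B s).trace).re * σ s)
        ≤ ((Aᴴ * (A * P⁻¹ + Q⁻¹ * A)).trace).re ∧
    ((Aᴴ * C).trace).re
        ≤ (∫ s in Set.Ioi (0 : ℝ), ((Aᴴ * B s).trace).re * σ s) :=
  ⟨setIntegral_mul_le_of_add_one_mul_le hσ hnorm hInt fun s hs =>
      add_one_mul_re_trace_le_of_sylvester hP hQ hs (hB s hs),
    le_setIntegral_mul_of_le_add_one_mul hσ hnorm hInt fun s hs =>
      re_trace_le_add_one_mul_of_sylvester hP.posSemidef hQ.posSemidef hs.le (hB s hs) hC⟩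

/-- Kubo–Ando type operator inequalities: for positive definite `P, Q` and a
function `k(λ) = ∫₀^∞ σ(s)/(s+λ) ds` built from a nonnegative density `σ`
satisfying the symmetry `σ(1/s) = s σ(s)` and the normalization `k(1) = 1`,
one has `R_P⁻¹ + L_Q⁻¹ ≥ R_P⁻¹ k(L_Q R_P⁻¹) ≥ (R_P + L_Q)⁻¹` in the sense of
quadratic forms on the Hilbert–Schmidt space.  Here, for `s > 0`,
`B s = (L_Q + s R_P)⁻¹(A)` (so that `R_P⁻¹ k(L_Q R_P⁻¹)(A) = ∫₀^∞ B s σ(s) ds`)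
and `C = (R_P + L_Q)⁻¹(A)`. -/
theorem kubo_ando_operator_inequalities {n : ℕ}
    (P Q : Matrix (Fin n) (Fin n) ℂ)
    (hP : P.PosDef) (hQ : Q.PosDef)
    (σ : ℝ → ℝ) (hσ : ∀ s, 0 < s → 0 ≤ σ s)
    (hσsym : ∀ s, 0 < s → σ (1 / s) = s * σ s)
    (hnorm : ∫ s in Set.Ioi (0 : ℝ), σ s / (s + 1) = 1)
    (A C : Matrix (Fin n) (Fin n) ℂ)
    (B : ℝ → Matrix (Fin n) (Fin n) ℂ)
    (hB : ∀ s, 0 < s → Q * B s + (s : ℂ) • (B s * P) = A)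
    (hC : Q * C + C * P = A)
    (hInt : IntegrableOn (fun s => ((Aᴴ * B s).trace).re * σ s) (Set.Ioi 0)) :
    (∫ s in Set.Ioi (0 : ℝ), ((Aᴴ * B s).trace).re * σ s)
        ≤ ((Aᴴ * (A * P⁻¹ + Q⁻¹ * A)).trace).re ∧
    ((Aᴴ * C).trace).re
        ≤ (∫ s in Set.Ioi (0 : ℝ), ((Aᴴ * B s).trace).re * σ s) :=
  kubo_ando_operator_inequalities_general P Q hP hQ σ hσ hnorm A C B hB hC hInt
end

section
/- For a positive definite matrix P, the operator Ω_P = L_P^{-1} + R_P^{-1} satisfies Ω_P = R_P^{-1}(R_P + L_P) L_P^{-1}, and for any self-adjoint traceless matrix A, ⟨A, Ω_P(A)⟩ ≥ ⟨A, (R_P + L_P)^{-1}(A)⟩ with ⟨A, Ω_P(A)⟩ = 2 Tr(A P^{-1} A). -/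
open Matrix
open scoped ComplexOrder

/-!
Write `A = P C + C P`. If `P X + X P = 0`, then
`tr (Xᴴ P X) + tr (X P Xᴴ) = tr (Xᴴ (P X + X P)) = 0` with both terms nonnegative, so `X = 0`;
hence the Sylvester equation has at most one solution and `C` is Hermitian together with `A`.
Expanding in `C` gives `⟨A, C⟩ = 2 tr (C P C)` and
`⟨A, Ω_P A⟩ = 2 tr (A P⁻¹ A) = 2 (3 tr (C P C) + tr ((C P)ᴴ P⁻¹ (C P)))`,
a sum of nonnegative traces.
-/

namespace Matrix

section CommRing

variable {R ι : Type*} [CommRing R] [Fintype ι]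

theorem trace_mul_add_mul_eq_two_mul_trace (A B : Matrix ι ι R) :
    (A * (B * A + A * B)).trace = 2 * (A * B * A).trace := by
  rw [Matrix.mul_add, trace_add, ← Matrix.mul_assoc, trace_mul_comm A (A * B), two_mul]

theorem trace_mul_add_mul_mul_self (P C : Matrix ι ι R) :
    ((P * C + C * P) * C).trace = 2 * (C * P * C).trace := by
  rw [Matrix.add_mul, trace_add, trace_mul_cycle, two_mul]

theorem trace_mul_add_mul_mul_inv_mul [DecidableEq ι] {P : Matrix ι ι R} (hP : IsUnit P.det)
    (C : Matrix ι ι R) :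
    ((P * C + C * P) * P⁻¹ * (P * C + C * P)).trace =
      3 * (C * P * C).trace + (P * C * P⁻¹ * (C * P)).trace := by
  have hexpand : (P * C + C * P) * P⁻¹ * (P * C + C * P) =
      P * C * C + P * C * P⁻¹ * (C * P) + C * P * C + C * C * P := by
    simp only [Matrix.add_mul, Matrix.mul_add, Matrix.mul_assoc,
      nonsing_inv_mul_cancel_left _ _ hP, mul_nonsing_inv_cancel_left _ _ hP]
    abel
  have hPCC : (P * C * C).trace = (C * P * C).trace := trace_mul_cycle P C C
  have hCCP : (C * C * P).trace = (C * P * C).trace := (trace_mul_cycle C C P).trans hPCC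
  rw [hexpand, trace_add, trace_add, trace_add, hPCC, hCCP]
  ring

theorem inv_mul_add_mul_inv_eq [DecidableEq ι] {P : Matrix ι ι R} (hP : IsUnit P.det)
    (A : Matrix ι ι R) :
    P⁻¹ * A + A * P⁻¹ = ((P⁻¹ * A) * P + P * (P⁻¹ * A)) * P⁻¹ := by
  rw [Matrix.add_mul, mul_nonsing_inv_cancel_right _ _ hP, mul_nonsing_inv_cancel_left _ _ hP]

end CommRing

section RCLike

variable {𝕜 ι : Type*} [RCLike 𝕜] [Fintype ι] {P : Matrix ι ι 𝕜}

theorem PosDef.trace_conjTranspose_mul_mul_eq_zero_iff (hP : P.PosDef) {X : Matrix ι ι 𝕜} :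
    (Xᴴ * P * X).trace = 0 ↔ X = 0 := by
  refine ⟨fun h => ?_, fun h => by simp [h]⟩
  have hzero : Xᴴ * P * X = 0 :=
    (hP.posSemidef.conjTranspose_mul_mul_same X).trace_eq_zero_iff.mp h
  refine ext_iff_mulVec.mpr fun v => ?_
  rw [zero_mulVec]
  by_contra hv
  have hpos := hP.dotProduct_mulVec_pos hv
  rw [star_mulVec, ← dotProduct_mulVec, mulVec_mulVec, mulVec_mulVec, hzero] at hpos
  simp at hpos

theorem PosDef.eq_zero_of_mul_add_mul_eq_zero (hP : P.PosDef) {X : Matrix ι ι 𝕜}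
    (h : P * X + X * P = 0) : X = 0 := by
  have hsum : (Xᴴ * P * X).trace + (X * P * Xᴴ).trace = 0 := by
    rw [trace_mul_comm (X * P), Matrix.mul_assoc, ← trace_add, ← Matrix.mul_add, h,
      Matrix.mul_zero, trace_zero]
  have h₁ := (hP.posSemidef.conjTranspose_mul_mul_same X).trace_nonneg
  have h₂ := (hP.posSemidef.mul_mul_conjTranspose_same X).trace_nonneg
  exact hP.trace_conjTranspose_mul_mul_eq_zero_iff.mp
    ((add_eq_zero_iff_of_nonneg h₁ h₂).mp hsum).1

theorem PosDef.isHermitian_of_mul_add_mul_eq (hP : P.PosDef) {A C : Matrix ι ι 𝕜}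
    (hA : A.IsHermitian) (hC : P * C + C * P = A) : C.IsHermitian := by
  have hCH : P * Cᴴ + Cᴴ * P = A := by
    rw [← hA.eq, ← hC, conjTranspose_add, conjTranspose_mul, conjTranspose_mul,
      hP.isHermitian.eq, add_comm]
  refine sub_eq_zero.mp (hP.eq_zero_of_mul_add_mul_eq_zero ?_)
  rw [Matrix.mul_sub, Matrix.sub_mul, sub_add_sub_comm, hCH, hC, sub_self]

theorem PosDef.trace_mul_add_mul_mul_le [DecidableEq ι] (hP : P.PosDef) {C : Matrix ι ι 𝕜}
    (hC : C.IsHermitian) :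
    ((P * C + C * P) * C).trace ≤ 2 * ((P * C + C * P) * P⁻¹ * (P * C + C * P)).trace := by
  have hCPC : 0 ≤ (C * P * C).trace := by
    simpa only [hC.eq] using (hP.posSemidef.conjTranspose_mul_mul_same C).trace_nonneg
  have hPCP : 0 ≤ (P * C * P⁻¹ * (C * P)).trace := by
    simpa only [conjTranspose_mul, hC.eq, hP.isHermitian.eq] using
      (hP.inv.posSemidef.conjTranspose_mul_mul_same (C * P)).trace_nonneg
  rw [trace_mul_add_mul_mul_self,
    trace_mul_add_mul_mul_inv_mul ((isUnit_iff_isUnit_det P).mp hP.isUnit)]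
  calc 2 * (C * P * C).trace
      ≤ 2 * (C * P * C).trace + 2 * (2 * (C * P * C).trace + (P * C * P⁻¹ * (C * P)).trace) :=
        le_add_of_nonneg_right <| mul_nonneg zero_le_two <|
          add_nonneg (mul_nonneg zero_le_two hCPC) hPCP
    _ = 2 * (3 * (C * P * C).trace + (P * C * P⁻¹ * (C * P)).trace) := by ring

end RCLike

end Matrix

/-- For positive definite `P`, the operator `Ω_P = L_P⁻¹ + R_P⁻¹` satisfies
`Ω_P = R_P⁻¹ (R_P + L_P) L_P⁻¹`; moreover, for any self-adjoint traceless `A`,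
with `C = (R_P + L_P)⁻¹(A)`,
`⟨A, Ω_P(A)⟩ ≥ ⟨A, (R_P + L_P)⁻¹(A)⟩` and `⟨A, Ω_P(A)⟩ = 2 Tr (A P⁻¹ A)`. -/
theorem quadratic_metric_operator_properties {n : ℕ}
    (P : Matrix (Fin n) (Fin n) ℂ) (hP : P.PosDef) :
    (∀ A : Matrix (Fin n) (Fin n) ℂ,
        P⁻¹ * A + A * P⁻¹ = ((P⁻¹ * A) * P + P * (P⁻¹ * A)) * P⁻¹) ∧
    (∀ A C : Matrix (Fin n) (Fin n) ℂ, Aᴴ = A → A.trace = 0 →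
        P * C + C * P = A →
        (Aᴴ * C).trace ≤ (Aᴴ * (P⁻¹ * A + A * P⁻¹)).trace ∧
        (Aᴴ * (P⁻¹ * A + A * P⁻¹)).trace = 2 * (A * P⁻¹ * A).trace) := by
  refine ⟨inv_mul_add_mul_inv_eq ((isUnit_iff_isUnit_det P).mp hP.isUnit),
    fun A C hA _ hC => ?_⟩
  have hΩ : (Aᴴ * (P⁻¹ * A + A * P⁻¹)).trace = 2 * (A * P⁻¹ * A).trace := by
    rw [hA, trace_mul_add_mul_eq_two_mul_trace]
  refine ⟨?_, hΩ⟩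
  have hCH : C.IsHermitian := hP.isHermitian_of_mul_add_mul_eq hA hC
  rw [hΩ, hA, ← hC]
  exact hP.trace_mul_add_mul_mul_le hCH
end

section
/- For positive definite P, the operator Ω_P^{log}(B) = ∫₀^∞ (P+sI)^{-1} B (P+sI)^{-1} ds has inverse given by (Ω_P^{log})^{-1}(B) = ∫₀^1 P^t B P^{1−t} dt. -/
/-!
Diagonalise `P = U diag(d) Uᴴ`. In the basis `U` both operators are Schur multipliers: the
`(i, j)` entry is multiplied by `∫₀¹ dᵢ^t dⱼ^(1-t) dt = L(dᵢ, dⱼ)`, the logarithmic mean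
`(dᵢ - dⱼ) / (log dᵢ - log dⱼ)`, resp. by `∫₀^∞ ((dᵢ + s)(dⱼ + s))⁻¹ ds = L(dᵢ, dⱼ)⁻¹`
(the primitive being `(log (dⱼ + s) - log (dᵢ + s)) / (dᵢ - dⱼ)`). The multipliers are reciprocal.
-/

open Matrix MeasureTheory Set Filter Real Topology
open scoped ComplexOrder

attribute [local instance] Matrix.normedAddCommGroup Matrix.normedSpace

noncomputable def logMean (a b : ℝ) : ℝ :=
  if a = b then a else (a - b) / (log a - log b)

section LogMean

variable {a b : ℝ}

theorem log_sub_log_ne_zero (ha : 0 < a) (hb : 0 < b) (hab : a ≠ b) : log a - log b ≠ 0 :=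
  sub_ne_zero.2 fun h => hab (log_injOn_pos ha hb h)

theorem logMean_ne_zero (ha : 0 < a) (hb : 0 < b) : logMean a b ≠ 0 := by
  unfold logMean
  split_ifs with hab
  · exact ha.ne'
  · exact div_ne_zero (sub_ne_zero.2 hab) (log_sub_log_ne_zero ha hb hab)

theorem rpow_mul_rpow_one_sub (ha : 0 < a) (hb : 0 < b) (t : ℝ) :
    a ^ t * b ^ (1 - t) = exp ((log a - log b) * t + log b) := by
  rw [rpow_def_of_pos ha, rpow_def_of_pos hb, ← exp_add]
  ring_nf

theorem continuous_rpow_mul_rpow_one_sub (ha : 0 < a) (hb : 0 < b) :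
    Continuous fun t : ℝ => a ^ t * b ^ (1 - t) := by
  simp_rw [rpow_mul_rpow_one_sub ha hb]
  fun_prop

theorem integral_rpow_mul_rpow_one_sub (ha : 0 < a) (hb : 0 < b) :
    ∫ t in Icc (0 : ℝ) 1, a ^ t * b ^ (1 - t) = logMean a b := by
  rw [integral_Icc_eq_integral_Ioc, ← intervalIntegral.integral_of_le zero_le_one]
  simp_rw [rpow_mul_rpow_one_sub ha hb]
  rcases eq_or_ne a b with rfl | hab
  · simp [logMean, exp_log ha]
  · rw [intervalIntegral.integral_comp_mul_add exp (log_sub_log_ne_zero ha hb hab),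
      integral_exp, logMean, if_neg hab]
    simp only [mul_zero, zero_add, mul_one, sub_add_cancel, exp_log ha, exp_log hb, smul_eq_mul]
    field_simp

theorem exists_hasDerivAt_inv_add_mul_add (ha : 0 < a) (hb : 0 < b) :
    ∃ F : ℝ → ℝ, (∀ s ∈ Ici (0 : ℝ), HasDerivAt F ((a + s) * (b + s))⁻¹ s) ∧
      Tendsto F atTop (𝓝 0) ∧ F 0 = -(logMean a b)⁻¹ := by
  rcases eq_or_ne a b with rfl | hab
  · refine ⟨fun s => -(a + s)⁻¹, fun s (hs : 0 ≤ s) => ?_, ?_, by simp [logMean]⟩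
    · have has : a + s ≠ 0 := by positivity
      refine (((hasDerivAt_id' s).const_add a).inv has).neg.congr_deriv ?_
      field_simp
    · simpa using (tendsto_inv_atTop_zero.comp (tendsto_atTop_add_const_left _ a tendsto_id)).neg
  · refine ⟨fun s => (log (b + s) - log (a + s)) / (a - b), fun s (hs : 0 ≤ s) => ?_, ?_, ?_⟩
    · have has : a + s ≠ 0 := by positivity
      have hbs : b + s ≠ 0 := by positivity
      refine ((((hasDerivAt_id' s).const_add b).log hbs).sub
        (((hasDerivAt_id' s).const_add a).log has)).div_const (a - b) |>.congr_deriv ?_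
      field_simp [sub_ne_zero.2 hab]
      ring
    · have hlim := (tendsto_log_comp_add_sub_log (b - a)).comp
        (tendsto_atTop_add_const_left atTop a tendsto_id)
      rw [← zero_div (a - b)]
      refine (hlim.div_const (a - b)).congr fun s => ?_
      simp only [Function.comp_apply, id, show a + s + (b - a) = b + s by ring]
    · simp only [add_zero, logMean, if_neg hab, inv_div]
      field_simp [sub_ne_zero.2 hab, log_sub_log_ne_zero ha hb hab]
      ring

theorem integrableOn_Ioi_inv_add_mul_add (ha : 0 < a) (hb : 0 < b) :
    IntegrableOn (fun s => ((a + s) * (b + s))⁻¹) (Ioi 0) := by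
  obtain ⟨F, hF, hlim, -⟩ := exists_hasDerivAt_inv_add_mul_add ha hb
  exact integrableOn_Ioi_deriv_of_nonneg' hF (fun s (hs : 0 < s) => by positivity) hlim

theorem integral_Ioi_inv_add_mul_add (ha : 0 < a) (hb : 0 < b) :
    ∫ s in Ioi (0 : ℝ), ((a + s) * (b + s))⁻¹ = (logMean a b)⁻¹ := by
  obtain ⟨F, hF, hlim, hF0⟩ := exists_hasDerivAt_inv_add_mul_add ha hb
  rw [integral_Ioi_of_hasDerivAt_of_nonneg' hF (fun s (hs : 0 < s) => by positivity) hlim, hF0]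
  ring

end LogMean

section MatrixIntegral

variable {X ι : Type*} [MeasurableSpace X] {μ : Measure X} [Fintype ι]

theorem Matrix.integral_mul_of_mul (A B : Matrix ι ι ℂ) {g : X → ι → ι → ℂ}
    (hg : ∀ i j, Integrable (fun x => g x i j) μ) :
    ∫ x, A * of (g x) * B ∂μ = A * of (fun i j => ∫ x, g x i j ∂μ) * B := by
  let L : (ι → ι → ℂ) →L[ℂ] Matrix ι ι ℂ := LinearMap.toContinuousLinearMap
    (LinearMap.mulRight ℂ B ∘ₗ LinearMap.mulLeft ℂ A ∘ₗ (ofLinearEquiv ℂ).toLinearMap)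
  have hrows : ∀ i, Integrable (fun x => g x i) μ := fun i => integrable_pi_iff.2 (hg i)
  calc ∫ x, A * of (g x) * B ∂μ = L (∫ x, g x ∂μ) :=
        L.integral_comp_comm (integrable_pi_iff.2 hrows)
    _ = A * of (fun i j => ∫ x, g x i j ∂μ) * B := by
        have hentries : ∫ x, g x ∂μ = fun i j => ∫ x, g x i j ∂μ := by
          funext i j
          rw [eval_integral hrows, eval_integral (hg i)]
        change A * of (∫ x, g x ∂μ) * B = _
        rw [hentries]

end MatrixIntegral

section Conjugation

variable {ι R : Type*} [Fintype ι] [DecidableEq ι] {U V : Matrix ι ι R}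

theorem Matrix.conj_mul_conj [Semiring R] (hVU : V * U = 1) (X Y : Matrix ι ι R) :
    U * X * V * (U * Y * V) = U * (X * Y) * V := by
  simp only [Matrix.mul_assoc]
  rw [← Matrix.mul_assoc V U, hVU, Matrix.one_mul]

theorem Matrix.conj_diagonal_mul_conj_mul_conj_diagonal [Semiring R] (hVU : V * U = 1)
    (v w : ι → R) (N : Matrix ι ι R) :
    U * diagonal v * V * (U * N * V) * (U * diagonal w * V)
      = U * of (fun i j => v i * N i j * w j) * V := by
  rw [conj_mul_conj hVU, conj_mul_conj hVU]
  congr 2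
  ext i j
  simp [diagonal_mul, mul_diagonal]

theorem Matrix.inv_conj_diagonal_add_smul_one [Field R] (hUV : U * V = 1) (hVU : V * U = 1)
    {v : ι → R} {s : R} (hv : ∀ i, v i + s ≠ 0) :
    (U * diagonal v * V + s • 1)⁻¹ = U * diagonal (fun i => (v i + s)⁻¹) * V := by
  have hconj : U * diagonal v * V + s • 1 = U * diagonal (fun i => v i + s) * V := by
    rw [← diagonal_add, ← smul_one_eq_diagonal, Matrix.mul_add, Matrix.add_mul,
      Matrix.mul_smul, Matrix.smul_mul, Matrix.mul_one, hUV]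
  apply inv_eq_right_inv
  rw [hconj, conj_mul_conj hVU, diagonal_mul_diagonal]
  simp [mul_inv_cancel₀ (hv _), hUV]

end Conjugation

section SpectralConjugation

variable {ι : Type*} [Fintype ι] [DecidableEq ι] {U V : Matrix ι ι ℂ} {d : ι → ℝ}

theorem integral_conj_diagonal_rpow (hVU : V * U = 1) (hd : ∀ i, 0 < d i)
    (N : Matrix ι ι ℂ) :
    ∫ t in Icc (0 : ℝ) 1, U * diagonal (fun i => ((d i ^ t : ℝ) : ℂ)) * V * (U * N * V) *
        (U * diagonal (fun i => ((d i ^ (1 - t) : ℝ) : ℂ)) * V)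
      = U * of (fun i j => (logMean (d i) (d j) : ℂ) * N i j) * V := by
  have hintegrand : ∀ t : ℝ,
      U * diagonal (fun i => ((d i ^ t : ℝ) : ℂ)) * V * (U * N * V) *
        (U * diagonal (fun i => ((d i ^ (1 - t) : ℝ) : ℂ)) * V)
      = U * of (fun i j => ((d i ^ t * d j ^ (1 - t) : ℝ) : ℂ) * N i j) * V := by
    intro t
    rw [conj_diagonal_mul_conj_mul_conj_diagonal hVU]
    congr 2
    ext i j
    simp only [of_apply]
    push_cast
    ring
  refine (integral_congr_ae (ae_of_all _ hintegrand)).trans ?_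
  refine (integral_mul_of_mul U V fun i j =>
    ((continuous_rpow_mul_rpow_one_sub (hd i) (hd j)).integrableOn_Icc.ofReal).mul_const _).trans ?_
  congr 2
  ext i j
  simp only [of_apply]
  rw [integral_mul_const]
  congr 1
  rw [← integral_rpow_mul_rpow_one_sub (hd i) (hd j)]
  exact integral_complex_ofReal

theorem integral_conj_diagonal_resolvent (hUV : U * V = 1) (hVU : V * U = 1)
    (hd : ∀ i, 0 < d i) (N : Matrix ι ι ℂ) :
    ∫ s in Ioi (0 : ℝ), (U * diagonal (fun i => (d i : ℂ)) * V + (s : ℂ) • 1)⁻¹ * (U * N * V) *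
        (U * diagonal (fun i => (d i : ℂ)) * V + (s : ℂ) • 1)⁻¹
      = U * of (fun i j => ((logMean (d i) (d j))⁻¹ : ℂ) * N i j) * V := by
  have hresolvent : ∀ s ∈ Ioi (0 : ℝ),
      (U * diagonal (fun i => (d i : ℂ)) * V + (s : ℂ) • 1)⁻¹ * (U * N * V) *
        (U * diagonal (fun i => (d i : ℂ)) * V + (s : ℂ) • 1)⁻¹
      = U * of (fun i j => ((((d i + s) * (d j + s))⁻¹ : ℝ) : ℂ) * N i j) * V := by
    intro s (hs : 0 < s)
    have hv : ∀ i, (d i : ℂ) + s ≠ 0 := fun i => by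
      exact_mod_cast (add_pos (hd i) hs).ne'
    rw [inv_conj_diagonal_add_smul_one hUV hVU hv, conj_diagonal_mul_conj_mul_conj_diagonal hVU]
    congr 2
    ext i j
    simp only [of_apply]
    push_cast [mul_inv]
    ring
  refine (setIntegral_congr_fun measurableSet_Ioi hresolvent).trans ?_
  refine (integral_mul_of_mul U V fun i j =>
    ((integrableOn_Ioi_inv_add_mul_add (hd i) (hd j)).ofReal).mul_const _).trans ?_
  congr 2
  ext i j
  simp only [of_apply]
  rw [integral_mul_const]
  congr 1
  rw [← Complex.ofReal_inv, ← integral_Ioi_inv_add_mul_add (hd i) (hd j)]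
  exact integral_complex_ofReal

end SpectralConjugation

theorem omega_log_inverse_general {n : ℕ}
    (P : Matrix (Fin n) (Fin n) ℂ)
    (U : Matrix (Fin n) (Fin n) ℂ) (hU : U * Uᴴ = 1) (hU' : Uᴴ * U = 1)
    (d : Fin n → ℝ) (hd : ∀ i, 0 < d i)
    (hPU : P = U * Matrix.diagonal (fun i => (d i : ℂ)) * Uᴴ)
    (Ppow : ℝ → Matrix (Fin n) (Fin n) ℂ)
    (hPpow : ∀ t, Ppow t = U * Matrix.diagonal (fun i => ((d i ^ t : ℝ) : ℂ)) * Uᴴ) :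
    ∀ B : Matrix (Fin n) (Fin n) ℂ,
      (∫ s in Set.Ioi (0 : ℝ),
          (P + (s : ℂ) • 1)⁻¹ *
            (∫ t in Set.Icc (0 : ℝ) 1, Ppow t * B * Ppow (1 - t)) *
          (P + (s : ℂ) • 1)⁻¹) = B ∧
      (∫ t in Set.Icc (0 : ℝ) 1,
          Ppow t *
            (∫ s in Set.Ioi (0 : ℝ), (P + (s : ℂ) • 1)⁻¹ * B * (P + (s : ℂ) • 1)⁻¹) *
          Ppow (1 - t)) = B := by
  intro B
  subst hPU
  obtain rfl : Ppow = _ := funext hPpow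
  obtain ⟨C, rfl⟩ : ∃ C, B = U * C * Uᴴ := ⟨Uᴴ * B * U, by
    rw [← Matrix.mul_assoc, ← Matrix.mul_assoc, hU, Matrix.one_mul, Matrix.mul_assoc, hU,
      Matrix.mul_one]⟩
  have hL : ∀ i j, (logMean (d i) (d j) : ℂ) ≠ 0 := fun i j =>
    Complex.ofReal_ne_zero.2 (logMean_ne_zero (hd i) (hd j))
  constructor
  · rw [integral_conj_diagonal_rpow hU' hd, integral_conj_diagonal_resolvent hU hU' hd]
    congr 2
    ext i j
    simp only [of_apply]
    field_simp [hL i j]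
  · rw [integral_conj_diagonal_resolvent hU hU' hd, integral_conj_diagonal_rpow hU' hd]
    congr 2
    ext i j
    simp only [of_apply]
    field_simp [hL i j]

/-- For positive definite `P` with spectral decomposition
`P = U diag(d) Uᴴ` (`U` unitary, `d i > 0`), the operator
`Ω_P^{log}(B) = ∫₀^∞ (P+s)⁻¹ B (P+s)⁻¹ ds` has inverse
`(Ω_P^{log})⁻¹(B) = ∫₀^1 P^t B P^{1−t} dt`, where
`P^t = U diag(d^t) Uᴴ` is given by the spectral calculus. -/
theorem omega_log_inverse {n : ℕ}
    (P : Matrix (Fin n) (Fin n) ℂ) (hP : P.PosDef)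
    (U : Matrix (Fin n) (Fin n) ℂ) (hU : U * Uᴴ = 1) (hU' : Uᴴ * U = 1)
    (d : Fin n → ℝ) (hd : ∀ i, 0 < d i)
    (hPU : P = U * Matrix.diagonal (fun i => (d i : ℂ)) * Uᴴ)
    (Ppow : ℝ → Matrix (Fin n) (Fin n) ℂ)
    (hPpow : ∀ t, Ppow t = U * Matrix.diagonal (fun i => ((d i ^ t : ℝ) : ℂ)) * Uᴴ) :
    ∀ B : Matrix (Fin n) (Fin n) ℂ,
      (∫ s in Set.Ioi (0 : ℝ),
          (P + (s : ℂ) • 1)⁻¹ *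
            (∫ t in Set.Icc (0 : ℝ) 1, Ppow t * B * Ppow (1 - t)) *
          (P + (s : ℂ) • 1)⁻¹) = B ∧
      (∫ t in Set.Icc (0 : ℝ) 1,
          Ppow t *
            (∫ s in Set.Ioi (0 : ℝ), (P + (s : ℂ) • 1)⁻¹ * B * (P + (s : ℂ) • 1)⁻¹) *
          Ppow (1 - t)) = B :=
  omega_log_inverse_general P U hU hU' d hd hPU Ppow hPpow
end

section
/- For invertible density matrices P, Q, the symmetrized logarithmic relative entropy satisfies Tr((P−Q)(log P − log Q)) = ∫₀^∞ Tr((P−Q)(Q + xI)^{-1}(P−Q)(P + xI)^{-1}) dx, and in particular Tr((P−Q)(log P − log Q)) ≥ 0. -/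
open Matrix MeasureTheory
open scoped ComplexOrder

section ScalarAux
open Set Filter

private lemma sym_aux_deriv {a b : ℝ} (ha : 0 < a) (hb : 0 < b) (x : ℝ) (hx : 0 ≤ x) :
    HasDerivAt (fun y => Real.log (b + y) - Real.log (a + y))
      ((b + x)⁻¹ - (a + x)⁻¹) x := by
  have h1 : HasDerivAt (fun y => Real.log (b + y)) ((b+x)⁻¹) x := by
    have : HasDerivAt (fun y => b + y) 1 x := (hasDerivAt_id x).const_add b
    simpa using this.log (by positivity)
  have h2 : HasDerivAt (fun y => Real.log (a + y)) ((a+x)⁻¹) x := by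
    have : HasDerivAt (fun y => a + y) 1 x := (hasDerivAt_id x).const_add a
    simpa using this.log (by positivity)
  exact h1.sub h2

private lemma sym_aux_tendsto {a b : ℝ} (ha : 0 < a) (hb : 0 < b) :
    Tendsto (fun y => Real.log (b + y) - Real.log (a + y)) atTop (nhds 0) := by
  have key : ∀ᶠ y in atTop, Real.log ((b + y) / (a + y))
      = Real.log (b + y) - Real.log (a + y) := by
    filter_upwards [eventually_ge_atTop (0:ℝ)] with y hy
    rw [Real.log_div (by positivity) (by positivity)]
  apply Tendsto.congr' key
  have h1 : Tendsto (fun y : ℝ => (b + y) / (a + y)) atTop (nhds 1) := by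
    have h2 : Tendsto (fun y : ℝ => a + y) atTop atTop :=
      tendsto_atTop_add_const_left _ a tendsto_id
    have h3 : Tendsto (fun y : ℝ => (b - a) / (a + y)) atTop (nhds 0) :=
      Tendsto.div_atTop tendsto_const_nhds h2
    have h4 : ∀ᶠ y in atTop, 1 + (b - a) / (a + y) = (b + y) / (a + y) := by
      filter_upwards [eventually_ge_atTop (0:ℝ)] with y hy
      field_simp
      ring
    have := (tendsto_const_nhds (x := (1:ℝ)) (f := atTop)).add h3
    rw [add_zero] at this
    exact Tendsto.congr' h4 this
  have : Tendsto Real.log (nhds 1) (nhds 0) := by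
    simpa using (Real.continuousAt_log (by norm_num : (1:ℝ) ≠ 0)).tendsto
  exact this.comp h1

private lemma sym_aux_nonneg {a b : ℝ} (hb : 0 < b) (hba : b ≤ a) (x : ℝ) (hx : 0 < x) :
    0 ≤ (b + x)⁻¹ - (a + x)⁻¹ := by
  have h1 : 0 < b + x := by linarith
  have : (a + x)⁻¹ ≤ (b + x)⁻¹ := by
    apply inv_anti₀ h1; linarith
  linarith

private lemma sym_aux_integrable0 {a b : ℝ} (ha : 0 < a) (hb : 0 < b) (hba : b ≤ a) :
    IntegrableOn (fun x => (b + x)⁻¹ - (a + x)⁻¹) (Set.Ioi (0:ℝ)) :=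
  integrableOn_Ioi_deriv_of_nonneg' (fun x hx => sym_aux_deriv ha hb x hx)
    (fun x hx => sym_aux_nonneg hb hba x hx) (sym_aux_tendsto ha hb)

private lemma sym_aux_integral0 {a b : ℝ} (ha : 0 < a) (hb : 0 < b) (hba : b ≤ a) :
    ∫ x in Set.Ioi (0:ℝ), ((b + x)⁻¹ - (a + x)⁻¹) = Real.log a - Real.log b := by
  have := integral_Ioi_of_hasDerivAt_of_nonneg
    ((sym_aux_deriv ha hb 0 le_rfl).continuousAt.continuousWithinAt)
    (fun x hx => sym_aux_deriv ha hb x (le_of_lt hx))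
    (fun x hx => sym_aux_nonneg hb hba x hx) (sym_aux_tendsto ha hb)
  simpa using this

private lemma sym_aux_eq {a b : ℝ} (ha : 0 < a) (hb : 0 < b) (x : ℝ) (hx : 0 < x) :
    (a - b)^2 * ((b + x)⁻¹ * (a + x)⁻¹) = (a - b) * ((b + x)⁻¹ - (a + x)⁻¹) := by
  have h1 : b + x ≠ 0 := by positivity
  have h2 : a + x ≠ 0 := by positivity
  field_simp
  ring

private lemma sym_aux_integrable {a b : ℝ} (ha : 0 < a) (hb : 0 < b) :
    IntegrableOn (fun x => (a - b)^2 * ((b + x)⁻¹ * (a + x)⁻¹)) (Set.Ioi (0:ℝ)) := by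
  rcases le_total b a with h | h
  · exact MeasureTheory.IntegrableOn.congr_fun ((sym_aux_integrable0 ha hb h).const_mul (a - b))
      (fun x hx => (sym_aux_eq ha hb x hx).symm) measurableSet_Ioi
  · refine MeasureTheory.IntegrableOn.congr_fun ((sym_aux_integrable0 hb ha h).const_mul (b - a))
      (fun x hx => ?_) measurableSet_Ioi
    rw [← sym_aux_eq hb ha x hx]
    ring_nf

private lemma sym_aux_integral {a b : ℝ} (ha : 0 < a) (hb : 0 < b) :
    ∫ x in Set.Ioi (0:ℝ), (a - b)^2 * ((b + x)⁻¹ * (a + x)⁻¹)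
      = (a - b) * (Real.log a - Real.log b) := by
  rcases le_total b a with h | h
  · rw [setIntegral_congr_fun measurableSet_Ioi
      (g := fun x => (a-b) * ((b + x)⁻¹ - (a + x)⁻¹)) (fun x hx => sym_aux_eq ha hb x hx)]
    rw [integral_const_mul, sym_aux_integral0 ha hb h]
  · have : ∀ x ∈ Set.Ioi (0:ℝ), (a - b)^2 * ((b + x)⁻¹ * (a + x)⁻¹)
        = (b - a) * ((a + x)⁻¹ - (b + x)⁻¹) := by
      intro x hx; rw [← sym_aux_eq hb ha x hx]; ring_nf
    rw [setIntegral_congr_fun measurableSet_Ioi this, integral_const_mul,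
      sym_aux_integral0 hb ha h]
    ring

private lemma sym_aux_term_nonneg {a b : ℝ} (ha : 0 < a) (hb : 0 < b) :
    0 ≤ (a - b) * (Real.log a - Real.log b) := by
  rcases le_total b a with h | h
  · have : Real.log b ≤ Real.log a := (Real.log_le_log_iff hb ha).mpr h
    nlinarith
  · have : Real.log a ≤ Real.log b := (Real.log_le_log_iff ha hb).mpr h
    nlinarith

end ScalarAux

section MatrixAux
variable {n : ℕ}

private lemma sym_conj_diag_inv (V : Matrix (Fin n) (Fin n) ℂ)
    (hV : V * Vᴴ = 1) (hV' : Vᴴ * V = 1) (f : Fin n → ℂ) (hf : ∀ j, f j ≠ 0) :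
    (V * Matrix.diagonal f * Vᴴ)⁻¹ = V * Matrix.diagonal (fun j => (f j)⁻¹) * Vᴴ := by
  apply Matrix.inv_eq_right_inv
  have key : (V * Matrix.diagonal f * Vᴴ) * (V * Matrix.diagonal (fun j => (f j)⁻¹) * Vᴴ)
      = V * (Matrix.diagonal f * Matrix.diagonal (fun j => (f j)⁻¹)) * Vᴴ := by
    simp only [Matrix.mul_assoc]
    rw [← Matrix.mul_assoc Vᴴ V, hV', Matrix.one_mul]
  rw [key, Matrix.diagonal_mul_diagonal]
  have : (fun j => f j * (f j)⁻¹) = fun _ => (1:ℂ) := funext fun j => mul_inv_cancel₀ (hf j)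
  rw [this, Matrix.diagonal_one, Matrix.mul_one, hV]

private lemma sym_shift (V : Matrix (Fin n) (Fin n) ℂ)
    (hV : V * Vᴴ = 1) (f : Fin n → ℂ) (x : ℂ) :
    V * Matrix.diagonal f * Vᴴ + x • (1 : Matrix (Fin n) (Fin n) ℂ)
      = V * Matrix.diagonal (fun j => f j + x) * Vᴴ := by
  have h1 : x • (1 : Matrix (Fin n) (Fin n) ℂ) = V * (x • (1 : Matrix (Fin n) (Fin n) ℂ)) * Vᴴ := by
    rw [Matrix.mul_smul, Matrix.mul_one, Matrix.smul_mul, hV]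
  rw [h1, ← Matrix.add_mul, ← Matrix.mul_add]
  congr 1
  rw [Matrix.smul_one_eq_diagonal, Matrix.diagonal_add]

private lemma sym_trace_hd (X Y : Matrix (Fin n) (Fin n) ℂ) (h : Fin n → ℂ) :
    (Xᴴ * Y * Matrix.diagonal h).trace
      = ∑ i, ∑ j, (starRingEnd ℂ) (X j i) * Y j i * h i := by
  simp only [Matrix.trace, Matrix.diag]
  refine Finset.sum_congr rfl fun i _ => ?_
  rw [Matrix.mul_diagonal, Matrix.mul_apply, Finset.sum_mul]
  refine Finset.sum_congr rfl fun j _ => ?_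
  rw [Matrix.conjTranspose_apply, starRingEnd_apply]

private lemma sym_trace_hd' (X Y : Matrix (Fin n) (Fin n) ℂ) (h : Fin n → ℂ) :
    (Y * Xᴴ * Matrix.diagonal h).trace
      = ∑ j, ∑ i, Y j i * (starRingEnd ℂ) (X j i) * h j := by
  simp only [Matrix.trace, Matrix.diag]
  refine Finset.sum_congr rfl fun j _ => ?_
  rw [Matrix.mul_diagonal, Matrix.mul_apply, Finset.sum_mul]
  refine Finset.sum_congr rfl fun i _ => ?_
  rw [Matrix.conjTranspose_apply, starRingEnd_apply]

end MatrixAux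

/-- For invertible density matrices `P, Q` with spectral decompositions
`P = U diag(d) Uᴴ` and `Q = V diag(e) Vᴴ` defining the matrix logarithms
`log P = U diag(log d) Uᴴ` and `log Q = V diag(log e) Vᴴ`, the symmetrized
logarithmic relative entropy satisfies
`Tr ((P−Q)(log P − log Q)) = ∫₀^∞ Tr ((P−Q)(Q+x)⁻¹(P−Q)(P+x)⁻¹) dx ≥ 0`. -/
theorem symmetrized_log_relative_entropy {n : ℕ}
    (P Q : Matrix (Fin n) (Fin n) ℂ) (hP : P.PosDef) (hQ : Q.PosDef)
    (hPtr : P.trace = 1) (hQtr : Q.trace = 1)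
    (U V : Matrix (Fin n) (Fin n) ℂ)
    (hU : U * Uᴴ = 1) (hU' : Uᴴ * U = 1)
    (hV : V * Vᴴ = 1) (hV' : Vᴴ * V = 1)
    (d e : Fin n → ℝ) (hd : ∀ i, 0 < d i) (he : ∀ i, 0 < e i)
    (hPU : P = U * Matrix.diagonal (fun i => (d i : ℂ)) * Uᴴ)
    (hQV : Q = V * Matrix.diagonal (fun i => (e i : ℂ)) * Vᴴ)
    (logP logQ : Matrix (Fin n) (Fin n) ℂ)
    (hlogP : logP = U * Matrix.diagonal (fun i => ((Real.log (d i) : ℝ) : ℂ)) * Uᴴ)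
    (hlogQ : logQ = V * Matrix.diagonal (fun i => ((Real.log (e i) : ℝ) : ℂ)) * Vᴴ) :
    ((P - Q) * (logP - logQ)).trace =
      (∫ x in Set.Ioi (0 : ℝ),
        ((P - Q) * (Q + (x : ℂ) • 1)⁻¹ * (P - Q) * (P + (x : ℂ) • 1)⁻¹).trace) ∧
    0 ≤ ((P - Q) * (logP - logQ)).trace := by
  set A : Matrix (Fin n) (Fin n) ℂ := P - Q with hA
  set W : Matrix (Fin n) (Fin n) ℂ := Vᴴ * U with hW
  set B : Matrix (Fin n) (Fin n) ℂ := Vᴴ * A * U with hB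
  -- A is Hermitian
  have hAH : Aᴴ = A := by
    rw [hA, Matrix.conjTranspose_sub, hP.1.eq, hQ.1.eq]
  -- B entries
  have hBmat : B = W * Matrix.diagonal (fun i => (d i : ℂ))
      - Matrix.diagonal (fun j => (e j : ℂ)) * W := by
    rw [hB, hA, Matrix.mul_sub, Matrix.sub_mul]
    congr 1
    · rw [hPU]
      simp only [Matrix.mul_assoc]
      rw [hU', Matrix.mul_one, hW, Matrix.mul_assoc]
    · rw [hQV, hW]
      simp only [Matrix.mul_assoc]
      rw [← Matrix.mul_assoc Vᴴ V, hV', Matrix.one_mul]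
  have hBW : ∀ j i, B j i = W j i * (((d i : ℝ) : ℂ) - ((e j : ℝ) : ℂ)) := by
    intro j i
    rw [hBmat]
    simp only [Matrix.sub_apply, Matrix.mul_diagonal, Matrix.diagonal_mul]
    ring
  -- conjugated A
  have hUAU : Uᴴ * A * U = Wᴴ * B := by
    rw [hW, hB, Matrix.conjTranspose_mul, Matrix.conjTranspose_conjTranspose]
    simp only [Matrix.mul_assoc]
    rw [← Matrix.mul_assoc V Vᴴ, hV, Matrix.one_mul]
  have hVAV : Vᴴ * A * V = B * Wᴴ := by
    rw [hW, hB, Matrix.conjTranspose_mul, Matrix.conjTranspose_conjTranspose]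
    simp only [Matrix.mul_assoc]
    rw [← Matrix.mul_assoc U Uᴴ, hU, Matrix.one_mul]
  have hBH : Bᴴ = Uᴴ * A * V := by
    rw [hB]
    simp only [Matrix.conjTranspose_mul, Matrix.conjTranspose_conjTranspose, hAH,
      Matrix.mul_assoc]
  -- real sum S
  set S : ℝ := ∑ i, ∑ j, Complex.normSq (W j i)
      * ((d i - e j) * (Real.log (d i) - Real.log (e j))) with hS
  -- LHS identity
  have hLHS : (A * (logP - logQ)).trace = (S : ℂ) := by
    have hT1 : (A * logP).trace
        = ∑ i, ∑ j, (starRingEnd ℂ) (W j i) * B j i * ((Real.log (d i) : ℝ) : ℂ) := by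
      rw [hlogP]
      have h1 : A * (U * Matrix.diagonal (fun i => ((Real.log (d i) : ℝ) : ℂ)) * Uᴴ)
          = (A * U * Matrix.diagonal (fun i => ((Real.log (d i) : ℝ) : ℂ))) * Uᴴ := by
        simp only [Matrix.mul_assoc]
      rw [h1, Matrix.trace_mul_comm]
      have h2 : Uᴴ * (A * U * Matrix.diagonal (fun i => ((Real.log (d i) : ℝ) : ℂ)))
          = (Uᴴ * A * U) * Matrix.diagonal (fun i => ((Real.log (d i) : ℝ) : ℂ)) := by
        simp only [Matrix.mul_assoc]
      rw [h2, hUAU, sym_trace_hd]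
    have hT2 : (A * logQ).trace
        = ∑ i, ∑ j, B j i * (starRingEnd ℂ) (W j i) * ((Real.log (e j) : ℝ) : ℂ) := by
      rw [show (∑ i, ∑ j, B j i * (starRingEnd ℂ) (W j i) * ((Real.log (e j) : ℝ) : ℂ))
        = ∑ j, ∑ i, B j i * (starRingEnd ℂ) (W j i) * ((Real.log (e j) : ℝ) : ℂ)
        from Finset.sum_comm]
      rw [hlogQ]
      have h1 : A * (V * Matrix.diagonal (fun j => ((Real.log (e j) : ℝ) : ℂ)) * Vᴴ)
          = (A * V * Matrix.diagonal (fun j => ((Real.log (e j) : ℝ) : ℂ))) * Vᴴ := by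
        simp only [Matrix.mul_assoc]
      rw [h1, Matrix.trace_mul_comm]
      have h2 : Vᴴ * (A * V * Matrix.diagonal (fun j => ((Real.log (e j) : ℝ) : ℂ)))
          = (Vᴴ * A * V) * Matrix.diagonal (fun j => ((Real.log (e j) : ℝ) : ℂ)) := by
        simp only [Matrix.mul_assoc]
      rw [h2, hVAV, sym_trace_hd']
    rw [Matrix.mul_sub, Matrix.trace_sub, hT1, hT2]
    rw [hS]
    push_cast
    rw [← Finset.sum_sub_distrib]
    refine Finset.sum_congr rfl fun i _ => ?_
    rw [← Finset.sum_sub_distrib]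
    refine Finset.sum_congr rfl fun j _ => ?_
    rw [hBW]
    set z := W j i
    calc (starRingEnd ℂ) z * (z * (((d i : ℝ) : ℂ) - ((e j : ℝ) : ℂ))) * ((Real.log (d i) : ℝ) : ℂ)
          - z * (((d i : ℝ) : ℂ) - ((e j : ℝ) : ℂ)) * (starRingEnd ℂ) z * ((Real.log (e j) : ℝ) : ℂ)
        = ((starRingEnd ℂ) z * z) * ((((d i : ℝ) : ℂ) - ((e j : ℝ) : ℂ))
            * (((Real.log (d i) : ℝ) : ℂ) - ((Real.log (e j) : ℝ) : ℂ))) := by ring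
      _ = ((Complex.normSq z : ℝ) : ℂ) * ((((d i : ℝ) : ℂ) - ((e j : ℝ) : ℂ))
            * (((Real.log (d i) : ℝ) : ℂ) - ((Real.log (e j) : ℝ) : ℂ))) := by
          rw [← Complex.normSq_eq_conj_mul_self]
      _ = _ := by push_cast; ring
  -- integrand functions
  have hfint : ∀ i j : Fin n, IntegrableOn (fun x : ℝ => Complex.normSq (W j i)
      * ((d i - e j)^2 * ((e j + x)⁻¹ * (d i + x)⁻¹))) (Set.Ioi (0:ℝ)) := fun i j =>
    (sym_aux_integrable (hd i) (he j)).const_mul _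
  -- pointwise trace identity on Ioi 0
  have hpt : ∀ x ∈ Set.Ioi (0:ℝ),
      (A * (Q + (x : ℂ) • 1)⁻¹ * A * (P + (x : ℂ) • 1)⁻¹).trace
        = ((∑ i, ∑ j, Complex.normSq (W j i)
            * ((d i - e j)^2 * ((e j + x)⁻¹ * (d i + x)⁻¹)) : ℝ) : ℂ) := by
    intro x hx
    have hx0 : (0:ℝ) < x := hx
    have hQx : (Q + (x : ℂ) • 1)⁻¹
        = V * Matrix.diagonal (fun j => (((e j : ℝ) : ℂ) + x)⁻¹) * Vᴴ := by
      rw [hQV, sym_shift V hV, sym_conj_diag_inv V hV hV']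
      intro j
      have : ((e j : ℝ) : ℂ) + (x : ℂ) = (((e j + x : ℝ)) : ℂ) := by push_cast; ring
      rw [this]
      exact Complex.ofReal_ne_zero.mpr (ne_of_gt (add_pos (he j) hx0))
    have hPx : (P + (x : ℂ) • 1)⁻¹
        = U * Matrix.diagonal (fun i => (((d i : ℝ) : ℂ) + x)⁻¹) * Uᴴ := by
      rw [hPU, sym_shift U hU, sym_conj_diag_inv U hU hU']
      intro i
      have : ((d i : ℝ) : ℂ) + (x : ℂ) = (((d i + x : ℝ)) : ℂ) := by push_cast; ring
      rw [this]
      exact Complex.ofReal_ne_zero.mpr (ne_of_gt (add_pos (hd i) hx0))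
    rw [hQx, hPx]
    set E' : Matrix (Fin n) (Fin n) ℂ := Matrix.diagonal (fun j => (((e j : ℝ) : ℂ) + x)⁻¹)
      with hE'
    set D' : Matrix (Fin n) (Fin n) ℂ := Matrix.diagonal (fun i => (((d i : ℝ) : ℂ) + x)⁻¹)
      with hD'
    have h1 : A * (V * E' * Vᴴ) * A * (U * D' * Uᴴ)
        = (A * (V * E' * Vᴴ) * A * (U * D')) * Uᴴ := by
      simp only [Matrix.mul_assoc]
    rw [h1, Matrix.trace_mul_comm]
    have h2 : Uᴴ * (A * (V * E' * Vᴴ) * A * (U * D'))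
        = Bᴴ * (E' * B) * D' := by
      rw [hBH, hB]
      simp only [Matrix.mul_assoc]
    rw [h2, sym_trace_hd B (E' * B)]
    push_cast
    refine Finset.sum_congr rfl fun i _ => ?_
    refine Finset.sum_congr rfl fun j _ => ?_
    rw [hE', Matrix.diagonal_mul, hBW]
    set z := W j i with hz
    have hconj : (starRingEnd ℂ) (z * (((d i : ℝ) : ℂ) - ((e j : ℝ) : ℂ)))
        = (starRingEnd ℂ) z * (((d i : ℝ) : ℂ) - ((e j : ℝ) : ℂ)) := by
      rw [_root_.map_mul, map_sub, Complex.conj_ofReal, Complex.conj_ofReal]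
    rw [hconj]
    calc (starRingEnd ℂ) z * (((d i : ℝ) : ℂ) - ((e j : ℝ) : ℂ))
          * ((((e j : ℝ) : ℂ) + x)⁻¹ * (z * (((d i : ℝ) : ℂ) - ((e j : ℝ) : ℂ))))
          * ((((d i : ℝ) : ℂ) + x)⁻¹)
        = ((starRingEnd ℂ) z * z) * ((((d i : ℝ) : ℂ) - ((e j : ℝ) : ℂ))^2
            * (((((e j : ℝ) : ℂ) + x))⁻¹ * ((((d i : ℝ) : ℂ) + x))⁻¹)) := by ring
      _ = ((Complex.normSq z : ℝ) : ℂ) * ((((d i : ℝ) : ℂ) - ((e j : ℝ) : ℂ))^2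
            * (((((e j : ℝ) : ℂ) + x))⁻¹ * ((((d i : ℝ) : ℂ) + x))⁻¹)) := by
          rw [← Complex.normSq_eq_conj_mul_self]
      _ = _ := by push_cast; ring
  -- integral evaluation
  have hIntReal : ∫ x in Set.Ioi (0:ℝ), (∑ i, ∑ j, Complex.normSq (W j i)
      * ((d i - e j)^2 * ((e j + x)⁻¹ * (d i + x)⁻¹))) = S := by
    rw [integral_finset_sum _ (fun i _ => integrable_finset_sum _ (fun j _ => hfint i j))]
    rw [hS]
    refine Finset.sum_congr rfl fun i _ => ?_
    rw [integral_finset_sum _ (fun j _ => hfint i j)]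
    refine Finset.sum_congr rfl fun j _ => ?_
    rw [integral_const_mul, sym_aux_integral (hd i) (he j)]
  have hRHS : (∫ x in Set.Ioi (0 : ℝ),
      (A * (Q + (x : ℂ) • 1)⁻¹ * A * (P + (x : ℂ) • 1)⁻¹).trace) = (S : ℂ) := by
    rw [setIntegral_congr_fun measurableSet_Ioi hpt, ← hIntReal]
    exact integral_ofReal
  have hSnonneg : 0 ≤ S := by
    rw [hS]
    refine Finset.sum_nonneg fun i _ => Finset.sum_nonneg fun j _ => ?_
    exact mul_nonneg (Complex.normSq_nonneg _) (sym_aux_term_nonneg (hd i) (he j))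
  refine ⟨by rw [hLHS, hRHS], ?_⟩
  rw [hLHS]
  exact Complex.zero_le_real.mpr hSnonneg
end

section
/- Monotonicity of the quadratic form under stochastic maps: if φ is a completely positive trace-preserving map, P, Q are positive definite with φ(P), φ(Q) positive definite, and s > 0, then for every matrix A, Tr(A* (R_P + s L_Q)^{-1}(A)) ≥ Tr(φ(A)* (R_{φ(P)} + s L_{φ(Q)})^{-1}(φ(A))). -/
open Matrix
open scoped ComplexOrder

/-!
Write `T = R_P + s L_Q`, `T' = R_{φ P} + s L_{φ Q}`, `⟪X, Z⟫ = Tr (Xᴴ Z)`, and let `ψ` be the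
adjoint of `φ`, a unital completely positive map. Both sides are the quadratic forms `⟪α, T α⟫`
and `⟪β, T' β⟫`. Put `Y = ψ β`. Since `T` and `T'` are self-adjoint,
`⟪α, T Y⟫ = ⟪A, ψ β⟫ = ⟪φ A, β⟫ = ⟪β, T' β⟫`, and likewise `⟪Y, T α⟫ = ⟪β, T' β⟫`, so
`⟪α, T α⟫ - ⟪β, T' β⟫ = ⟪α - Y, T (α - Y)⟫ + (⟪β, T' β⟫ - ⟪Y, T Y⟫)`.
The first term is nonnegative because `T` is positive; the second because of the Kadison–Schwarz
inequalities `ψ(β)ᴴ ψ(β) ≤ ψ(βᴴ β)` and `ψ(β) ψ(β)ᴴ ≤ ψ(β βᴴ)`, traced against `P` and `Q`.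
-/

open scoped MatrixOrder

namespace Matrix

variable {𝕜 ι l n : Type*} [RCLike 𝕜] [Fintype ι] [Fintype n]

lemma PosSemidef.trace_mul_nonneg {A B : Matrix n n 𝕜} (hA : A.PosSemidef) (hB : B.PosSemidef) :
    0 ≤ (A * B).trace := by
  classical
  obtain ⟨S, rfl⟩ := CStarAlgebra.nonneg_iff_eq_star_mul_self.mp hB.nonneg
  rw [← Matrix.mul_assoc, trace_mul_cycle, star_eq_conjTranspose]
  exact (hA.mul_mul_conjTranspose_same S).trace_nonneg

lemma PosSemidef.trace_mul_le_trace_mul {A B C : Matrix n n 𝕜} (hA : A.PosSemidef)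
    (hBC : B ≤ C) : (B * A).trace ≤ (C * A).trace := by
  rw [← sub_nonneg, ← trace_sub, ← Matrix.sub_mul]
  exact (le_iff.mp hBC).trace_mul_nonneg hA

section sylvesterMap

variable {P Q : Matrix n n 𝕜} {c : 𝕜}

def sylvesterMap (P Q : Matrix n n 𝕜) (c : 𝕜) : Matrix n n 𝕜 →ₗ[𝕜] Matrix n n 𝕜 :=
  LinearMap.mulRight 𝕜 P + c • LinearMap.mulLeft 𝕜 Q

@[simp]
lemma sylvesterMap_apply (X : Matrix n n 𝕜) : sylvesterMap P Q c X = X * P + c • (Q * X) := rfl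

lemma trace_conjTranspose_sylvesterMap_mul (hP : P.IsHermitian) (hQ : Q.IsHermitian)
    (hc : IsSelfAdjoint c) (X Z : Matrix n n 𝕜) :
    ((sylvesterMap P Q c X)ᴴ * Z).trace = (Xᴴ * sylvesterMap P Q c Z).trace := by
  simp only [sylvesterMap_apply, conjTranspose_add, conjTranspose_smul, conjTranspose_mul,
    hP.eq, hQ.eq, hc.star_eq, Matrix.add_mul, Matrix.mul_add, Matrix.smul_mul, Matrix.mul_smul,
    trace_add, trace_smul, Matrix.mul_assoc]
  rw [trace_mul_comm P, Matrix.mul_assoc]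

lemma trace_conjTranspose_mul_sylvesterMap_self (X : Matrix n n 𝕜) :
    (Xᴴ * sylvesterMap P Q c X).trace = (Xᴴ * X * P).trace + c * (X * Xᴴ * Q).trace := by
  rw [sylvesterMap_apply, Matrix.mul_add, trace_add, Matrix.mul_smul, trace_smul, smul_eq_mul,
    ← Matrix.mul_assoc, ← Matrix.mul_assoc, trace_mul_cycle Xᴴ Q X]

lemma trace_conjTranspose_mul_sylvesterMap_self_nonneg (hP : P.PosSemidef) (hQ : Q.PosSemidef)
    (hc : 0 ≤ c) (X : Matrix n n 𝕜) : 0 ≤ (Xᴴ * sylvesterMap P Q c X).trace := by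
  rw [trace_conjTranspose_mul_sylvesterMap_self]
  exact add_nonneg ((posSemidef_conjTranspose_mul_self X).trace_mul_nonneg hP)
    (mul_nonneg hc ((posSemidef_self_mul_conjTranspose X).trace_mul_nonneg hQ))

end sylvesterMap

def krausMap (V : ι → Matrix l n 𝕜) (X : Matrix n n 𝕜) : Matrix l l 𝕜 :=
  ∑ k, V k * X * (V k)ᴴ

variable (V : ι → Matrix l n 𝕜)

lemma conjTranspose_krausMap (X : Matrix n n 𝕜) : (krausMap V X)ᴴ = krausMap V Xᴴ := by
  simp [krausMap, conjTranspose_sum, Matrix.mul_assoc]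

lemma IsHermitian.krausMap {X : Matrix n n 𝕜} (hX : X.IsHermitian) : (krausMap V X).IsHermitian :=
  (conjTranspose_krausMap V X).trans (by rw [hX.eq])

variable [Fintype l]

lemma trace_krausMap_mul (X : Matrix n n 𝕜) (B : Matrix l l 𝕜) :
    (krausMap V X * B).trace = (X * krausMap (fun k ↦ (V k)ᴴ) B).trace := by
  simp only [krausMap, conjTranspose_conjTranspose, Matrix.sum_mul, Matrix.mul_sum, trace_sum]
  refine Finset.sum_congr rfl fun k _ ↦ ?_
  rw [Matrix.mul_assoc (V k * X), Matrix.mul_assoc (V k), trace_mul_comm (V k)]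
  simp only [Matrix.mul_assoc]

theorem krausMap_conjTranspose_mul_self_le [DecidableEq l] (hV : ∑ k, V k * (V k)ᴴ = 1)
    (B : Matrix n n 𝕜) : (krausMap V B)ᴴ * krausMap V B ≤ krausMap V (Bᴴ * B) := by
  set Y := krausMap V B
  have hsq : krausMap V (Bᴴ * B) - Yᴴ * Y =
      ∑ k, (B * (V k)ᴴ - (V k)ᴴ * Y)ᴴ * (B * (V k)ᴴ - (V k)ᴴ * Y) := by
    have hterm : ∀ k, (B * (V k)ᴴ - (V k)ᴴ * Y)ᴴ * (B * (V k)ᴴ - (V k)ᴴ * Y) =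
        V k * (Bᴴ * B) * (V k)ᴴ - V k * Bᴴ * (V k)ᴴ * Y - Yᴴ * (V k * B * (V k)ᴴ)
          + Yᴴ * (V k * (V k)ᴴ) * Y := fun k ↦ by
      simp only [conjTranspose_sub, conjTranspose_mul, conjTranspose_conjTranspose,
        Matrix.sub_mul, Matrix.mul_sub, Matrix.mul_assoc]
      abel
    have hYH : ∑ k, V k * Bᴴ * (V k)ᴴ = Yᴴ := (conjTranspose_krausMap V B).symm
    simp only [hterm, Finset.sum_add_distrib, Finset.sum_sub_distrib, ← Finset.sum_mul,
      ← Finset.mul_sum, hV, hYH, Matrix.mul_one]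
    simp only [krausMap, Y]
    abel
  rw [le_iff, hsq]
  exact posSemidef_sum _ fun k _ ↦ posSemidef_conjTranspose_mul_self _

variable {P Q : Matrix n n 𝕜} {c : 𝕜}

theorem trace_conjTranspose_mul_sylvesterMap_krausMap_le [DecidableEq n]
    (hV : ∑ k, (V k)ᴴ * V k = 1) (hP : P.PosSemidef) (hQ : Q.PosSemidef) (hc : 0 ≤ c)
    (β : Matrix l l 𝕜) :
    ((krausMap (fun k ↦ (V k)ᴴ) β)ᴴ * sylvesterMap P Q c (krausMap (fun k ↦ (V k)ᴴ) β)).trace ≤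
      (βᴴ * sylvesterMap (krausMap V P) (krausMap V Q) c β).trace := by
  set W : ι → Matrix n l 𝕜 := fun k ↦ (V k)ᴴ
  have hW : ∑ k, W k * (W k)ᴴ = 1 := by simpa [W] using hV
  have hdual (B : Matrix l l 𝕜) (X : Matrix n n 𝕜) :
      (krausMap W B * X).trace = (B * krausMap V X).trace := by
    simpa [W] using trace_krausMap_mul W B X
  rw [trace_conjTranspose_mul_sylvesterMap_self, trace_conjTranspose_mul_sylvesterMap_self]
  refine add_le_add ?_ (mul_le_mul_of_nonneg_left ?_ hc)
  · calc _ ≤ (krausMap W (βᴴ * β) * P).trace :=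
          hP.trace_mul_le_trace_mul (krausMap_conjTranspose_mul_self_le W hW β)
      _ = _ := hdual _ _
  · have hKS := krausMap_conjTranspose_mul_self_le W hW βᴴ
    rw [conjTranspose_krausMap, conjTranspose_conjTranspose] at hKS
    calc _ ≤ (krausMap W (β * βᴴ) * Q).trace := by
          rw [conjTranspose_krausMap]
          exact hQ.trace_mul_le_trace_mul hKS
      _ = _ := hdual _ _

theorem trace_conjTranspose_krausMap_mul_le_of_sylvesterMap_eq [DecidableEq n]
    (hV : ∑ k, (V k)ᴴ * V k = 1) (hP : P.PosSemidef) (hQ : Q.PosSemidef) (hc : 0 ≤ c)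
    {A α : Matrix n n 𝕜} {β : Matrix l l 𝕜} (hα : sylvesterMap P Q c α = A)
    (hβ : sylvesterMap (krausMap V P) (krausMap V Q) c β = krausMap V A) :
    ((krausMap V A)ᴴ * β).trace ≤ (Aᴴ * α).trace := by
  set T := sylvesterMap P Q c
  set T' := sylvesterMap (krausMap V P) (krausMap V Q) c
  set Y := krausMap (fun k ↦ (V k)ᴴ) β
  have hT : ∀ X Z, ((T X)ᴴ * Z).trace = (Xᴴ * T Z).trace :=
    trace_conjTranspose_sylvesterMap_mul hP.isHermitian hQ.isHermitian (.of_nonneg hc)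
  have hT' : ∀ X Z, ((T' X)ᴴ * Z).trace = (Xᴴ * T' Z).trace :=
    trace_conjTranspose_sylvesterMap_mul (hP.isHermitian.krausMap V) (hQ.isHermitian.krausMap V)
      (.of_nonneg hc)
  have hA : (Aᴴ * α).trace = (αᴴ * T α).trace := by rw [← hα, hT]
  have hφA : ((krausMap V A)ᴴ * β).trace = (βᴴ * T' β).trace := by rw [← hβ, hT']
  have hαY : (αᴴ * T Y).trace = ((krausMap V A)ᴴ * β).trace := by
    rw [← hT, hα, conjTranspose_krausMap, trace_krausMap_mul]
  have hYα : (Yᴴ * T α).trace = ((krausMap V A)ᴴ * β).trace := by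
    rw [hα, conjTranspose_krausMap, trace_mul_comm, ← trace_krausMap_mul, trace_mul_comm, hφA,
      hβ]
  have hδ : ((α - Y)ᴴ * T (α - Y)).trace =
      (αᴴ * T α).trace - (αᴴ * T Y).trace - (Yᴴ * T α).trace + (Yᴴ * T Y).trace := by
    simp only [map_sub, conjTranspose_sub, Matrix.sub_mul, Matrix.mul_sub, trace_sub]
    ring
  have hgap : (Aᴴ * α).trace - ((krausMap V A)ᴴ * β).trace =
      ((α - Y)ᴴ * T (α - Y)).trace + ((βᴴ * T' β).trace - (Yᴴ * T Y).trace) := by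
    linear_combination hA + hαY + hYα + hφA - hδ
  rw [← sub_nonneg, hgap]
  exact add_nonneg (trace_conjTranspose_mul_sylvesterMap_self_nonneg hP hQ hc _)
    (sub_nonneg.mpr (trace_conjTranspose_mul_sylvesterMap_krausMap_le V hV hP hQ hc β))

end Matrix

theorem monotonicity_of_quadratic_form_under_CPTP_general {n m N : ℕ}
    (V : Fin N → Matrix (Fin m) (Fin n) ℂ)
    (hTP : ∑ k, (V k)ᴴ * V k = 1)
    (φ : Matrix (Fin n) (Fin n) ℂ → Matrix (Fin m) (Fin m) ℂ)
    (hφ : ∀ X, φ X = ∑ k, V k * X * (V k)ᴴ)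
    (P Q : Matrix (Fin n) (Fin n) ℂ) (hP : P.PosDef) (hQ : Q.PosDef)
    (s : ℝ) (hs : 0 < s)
    (A α : Matrix (Fin n) (Fin n) ℂ) (β : Matrix (Fin m) (Fin m) ℂ)
    (hα : α * P + (s : ℂ) • (Q * α) = A)
    (hβ : β * φ P + (s : ℂ) • (φ Q * β) = φ A) :
    ((φ A)ᴴ * β).trace ≤ (Aᴴ * α).trace := by
  obtain rfl : φ = krausMap V := funext hφ
  exact trace_conjTranspose_krausMap_mul_le_of_sylvesterMap_eq V hTP hP.posSemidef
    hQ.posSemidef (Complex.zero_le_real.mpr hs.le) hα hβ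

/-- Monotonicity of the superoperator quadratic form under a completely
positive trace-preserving map `φ(X) = Σ_k V_k X V_kᴴ` (with `Σ V_kᴴ V_k = 1`):
for positive definite `P, Q` with `φ(P), φ(Q)` positive definite, `s > 0`, and
any `A`, with `α = (R_P + s L_Q)⁻¹(A)` and
`β = (R_{φ(P)} + s L_{φ(Q)})⁻¹(φ(A))` one has
`Tr (φ(A)ᴴ β) ≤ Tr (Aᴴ α)`. -/
theorem monotonicity_of_quadratic_form_under_CPTP {n m N : ℕ}
    (V : Fin N → Matrix (Fin m) (Fin n) ℂ)
    (hTP : ∑ k, (V k)ᴴ * V k = 1)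
    (φ : Matrix (Fin n) (Fin n) ℂ → Matrix (Fin m) (Fin m) ℂ)
    (hφ : ∀ X, φ X = ∑ k, V k * X * (V k)ᴴ)
    (P Q : Matrix (Fin n) (Fin n) ℂ) (hP : P.PosDef) (hQ : Q.PosDef)
    (hφP : (φ P).PosDef) (hφQ : (φ Q).PosDef)
    (s : ℝ) (hs : 0 < s)
    (A α : Matrix (Fin n) (Fin n) ℂ) (β : Matrix (Fin m) (Fin m) ℂ)
    (hα : α * P + (s : ℂ) • (Q * α) = A)
    (hβ : β * φ P + (s : ℂ) • (φ Q * β) = φ A) :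
    ((φ A)ᴴ * β).trace ≤ (Aᴴ * α).trace :=
  monotonicity_of_quadratic_form_under_CPTP_general V hTP φ hφ P Q hP hQ s hs A α β hα hβ
end

section
/- The Bures distance between positive definite density matrices satisfies [D^{Bures}(P,Q)]² = 2(1 − Tr((√P Q √P)^{1/2})) ≤ Tr((√P − √Q)²) = 2(1 − Tr(√P √Q)). -/
/-!
With `S = √P`, `T = √Q`, the matrix `√P Q √P` equals `(ST)(ST)ᴴ`, so its square root `M` is
`|(ST)ᴴ|` and the inequality is `Re Tr(ST) ≤ Tr M`. This follows from
`0 ≤ Tr((M - ST)ᴴ M⁻¹ (M - ST)) = 2 Tr M - 2 Re Tr(ST)`; the equality is the expansion of the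
square, using `Tr P = Tr Q = 1`.
-/

open Matrix
open scoped ComplexOrder

noncomputable def Matrix.PosSemidef.sqrt {𝕜 : Type*} [RCLike 𝕜] {n : Type*} [Fintype n]
    [DecidableEq n] {A : Matrix n n 𝕜} (hA : A.PosSemidef) : Matrix n n 𝕜 :=
  hA.1.eigenvectorUnitary.1 * diagonal ((↑) ∘ (√·) ∘ hA.1.eigenvalues) *
    (star hA.1.eigenvectorUnitary : Matrix n n 𝕜)

open scoped MatrixOrder

namespace Matrix

theorem trace_sub_mul_sub_self {n R : Type*} [Fintype n] [CommRing R] (S T : Matrix n n R) :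
    ((S - T) * (S - T)).trace = (S * S).trace + (T * T).trace - 2 * (S * T).trace := by
  have hexpand : (S - T) * (S - T) = S * S + T * T - S * T - T * S := by noncomm_ring
  rw [hexpand, trace_sub, trace_sub, trace_add, trace_mul_comm T S]
  ring

variable {𝕜 n : Type*} [RCLike 𝕜] [Fintype n] [DecidableEq n]

namespace PosSemidef

variable {A : Matrix n n 𝕜} (hA : A.PosSemidef)
include hA

theorem sqrt_eq_cfcSqrt : hA.sqrt = CFC.sqrt A := by
  rw [CFC.sqrt_eq_cfc, cfc_nnreal_eq_real _ A hA.nonneg, hA.1.cfc_eq]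
  simp only [PosSemidef.sqrt, IsHermitian.cfc, Unitary.conjStarAlgAut_apply]
  congr 3
  funext i
  simp [max_eq_left (hA.eigenvalues_nonneg i)]

theorem sqrt_mul_self : hA.sqrt * hA.sqrt = A := by
  rw [hA.sqrt_eq_cfcSqrt, CFC.sqrt_mul_sqrt_self A hA.nonneg]

theorem posSemidef_sqrt : hA.sqrt.PosSemidef := by
  rw [hA.sqrt_eq_cfcSqrt]
  exact (CFC.sqrt_nonneg A).posSemidef

theorem isUnit_sqrt (hA' : IsUnit A) : IsUnit hA.sqrt :=
  isUnit_of_mul_isUnit_left (hA.sqrt_mul_self ▸ hA')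

theorem posDef_sqrt (hA' : IsUnit A) : hA.sqrt.PosDef :=
  hA.posSemidef_sqrt.posDef_iff_isUnit.mpr (hA.isUnit_sqrt hA')

end PosSemidef

/-- For `M > 0` with `M² = A Aᴴ`, i.e. `M = |Aᴴ|`, this is `Re Tr A ≤ Tr |A|`. -/
theorem trace_add_trace_conjTranspose_le {M A : Matrix n n 𝕜} (hM : M.PosDef)
    (hA : A * Aᴴ = M * M) : A.trace + Aᴴ.trace ≤ 2 * M.trace := by
  have hMinv : M⁻¹ * M = 1 := nonsing_inv_mul M (isUnit_iff_isUnit_det M |>.mp hM.isUnit)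
  have hinvM : M * M⁻¹ = 1 := mul_nonsing_inv M (isUnit_iff_isUnit_det M |>.mp hM.isUnit)
  have hMH : Mᴴ = M := hM.isHermitian
  have hnonneg : 0 ≤ ((M - A)ᴴ * M⁻¹ * (M - A)).trace :=
    (hM.inv.posSemidef.conjTranspose_mul_mul_same (M - A)).trace_nonneg
  have hexpand : (M - A)ᴴ * M⁻¹ * (M - A) = M - A - Aᴴ + Aᴴ * M⁻¹ * A := by
    rw [conjTranspose_sub, hMH, sub_mul, sub_mul, mul_sub, mul_sub, hinvM, Matrix.one_mul,
      Matrix.one_mul, Matrix.mul_assoc Aᴴ M⁻¹ M, hMinv, Matrix.mul_one]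
    abel
  have hcross : (Aᴴ * M⁻¹ * A).trace = M.trace := by
    rw [trace_mul_cycle, hA, Matrix.mul_assoc, hinvM, Matrix.mul_one]
  rw [hexpand, trace_add, trace_sub, trace_sub, hcross] at hnonneg
  refine sub_nonneg.mp ?_
  convert hnonneg using 1
  ring

end Matrix

/-- The squared Bures distance between density matrices,
`[D^{Bures}(P,Q)]² = 2 (1 − Tr ((√P Q √P)^{1/2}))`, is bounded above by
`Tr ((√P − √Q)²) = 2 (1 − Tr (√P √Q))`. -/
theorem bures_distance_bound {n : ℕ}
    (P Q : Matrix (Fin n) (Fin n) ℂ) (hP : P.PosDef) (hQ : Q.PosDef)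
    (hPtr : P.trace = 1) (hQtr : Q.trace = 1)
    (hSQS : (hP.posSemidef.sqrt * Q * hP.posSemidef.sqrt).PosSemidef) :
    2 * (1 - (hSQS.sqrt).trace) ≤
      ((hP.posSemidef.sqrt - hQ.posSemidef.sqrt) *
        (hP.posSemidef.sqrt - hQ.posSemidef.sqrt)).trace ∧
    ((hP.posSemidef.sqrt - hQ.posSemidef.sqrt) *
        (hP.posSemidef.sqrt - hQ.posSemidef.sqrt)).trace =
      2 * (1 - (hP.posSemidef.sqrt * hQ.posSemidef.sqrt).trace) := by
  set S := hP.posSemidef.sqrt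
  set T := hQ.posSemidef.sqrt
  have hS : S * S = P := hP.posSemidef.sqrt_mul_self
  have hT : T * T = Q := hQ.posSemidef.sqrt_mul_self
  have hST : (S * T)ᴴ = T * S := by
    rw [conjTranspose_mul, hP.posSemidef.posSemidef_sqrt.1, hQ.posSemidef.posSemidef_sqrt.1]
  have hSunit : IsUnit S := hP.posSemidef.isUnit_sqrt hP.isUnit
  have hM : hSQS.sqrt.PosDef := hSQS.posDef_sqrt ((hSunit.mul hQ.isUnit).mul hSunit)
  have hle : 2 * (S * T).trace ≤ 2 * hSQS.sqrt.trace := by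
    have h := trace_add_trace_conjTranspose_le hM (A := S * T) (by
      rw [hST, hSQS.sqrt_mul_self, Matrix.mul_assoc S T, ← Matrix.mul_assoc T, hT,
        Matrix.mul_assoc])
    rwa [hST, trace_mul_comm T S, ← two_mul] at h
  have heq : ((S - T) * (S - T)).trace = 2 * (1 - (S * T).trace) := by
    rw [trace_sub_mul_sub_self, hS, hT, hPtr, hQtr]
    ring
  refine ⟨?_, heq⟩
  calc 2 * (1 - hSQS.sqrt.trace) = 2 - 2 * hSQS.sqrt.trace := by ring
    _ ≤ 2 - 2 * (S * T).trace := sub_le_sub_left hle 2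
    _ = ((S - T) * (S - T)).trace := by rw [heq]; ring
end
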